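/- An R-module M is Baer if and only if for every nonempty index set Λ and every R-homomorphism f: M → M^Λ (direct product), ker f is a direct summand of M. -/
import Mathlib


universe u v

/-- `M` is a Baer module: the common kernel of any nonempty set of endomorphisms
is a direct summand of `M`. -/
def IsBaerModule (R : Type u) [Ring R] (M : Type v) [AddCommGroup M]
    [Module R M] : Prop :=
  ∀ X : Set (Module.End R M), X.Nonempty → ∃ p : Submodule R M,
    IsCompl (⨅ f ∈ X, LinearMap.ker f) p

theorem stmt12 (R : Type u) [Ring R] (M : Type v) [AddCommGroup M] [Module R M] :
    IsBaerModule R M ↔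
      ∀ (Λ : Type v), Nonempty Λ → ∀ f : M →ₗ[R] (Λ → M),
        ∃ p : Submodule R M, IsCompl (LinearMap.ker f) p := by
  constructor
  · intro hB Λ hΛ f
    obtain ⟨p, hp⟩ := hB (Set.range fun l : Λ => (LinearMap.proj l).comp f)
      (Set.range_nonempty _)
    refine ⟨p, ?_⟩
    convert hp using 2
    rw [iInf_range]
    ext x
    simp [LinearMap.mem_ker, funext_iff]
  · intro h X hX
    haveI : Nonempty X := hX.to_subtype
    obtain ⟨p, hp⟩ := h X ‹_› (LinearMap.pi fun g : X => (g : Module.End R M))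
    refine ⟨p, ?_⟩
    convert hp using 2
    rw [LinearMap.ker_pi, iInf_subtype'']
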